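/- For every integer M ≥ 1, in the Baumslag–Solitar group BS(1,M) one has limsup_{n→∞} (g_n)^{1/n} = 4, where the n-th roots are real n-th roots; equivalently, the power series G(z;1) = Σ_{n≥0} g_n z^n has radius of convergence exactly 1/4. -/

import Mathlib

noncomputable section

open LaurentPolynomial PowerSeries

/-- The single relator `a^N b a^{-M} b^{-1}` of the Baumslag–Solitar group. -/
def bsRels (N M : ℕ) : Set (FreeGroup (Fin 2)) :=
  {FreeGroup.of 0 ^ N * FreeGroup.of 1 * (FreeGroup.of 0 ^ M)⁻¹ * (FreeGroup.of 1)⁻¹}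

/-- The Baumslag–Solitar group `BS(N,M)`. -/
abbrev BSGroup (N M : ℕ) := PresentedGroup (bsRels N M)

/-- The image of the generator `a` in `BS(N,M)`. -/
def bsA (N M : ℕ) : BSGroup N M := PresentedGroup.of 0

/-- The image of the generator `b` in `BS(N,M)`. -/
def bsB (N M : ℕ) : BSGroup N M := PresentedGroup.of 1

/-- The alphabet `{a, a⁻¹, b, b⁻¹}`: a generator index together with a sign. -/
abbrev BSLetter : Type := Fin 2 × Bool

/-- The evaluation of a letter in `BS(N,M)`. -/
def letterVal (N M : ℕ) (p : BSLetter) : BSGroup N M :=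
  if p.2 then PresentedGroup.of p.1 else (PresentedGroup.of p.1)⁻¹

/-- The evaluation in `BS(N,M)` of the prefix of length `m` of a word. -/
def prefixVal (N M : ℕ) {n : ℕ} (w : Fin n → BSLetter) (m : ℕ) : BSGroup N M :=
  (((List.ofFn w).take m).map (letterVal N M)).prod

/-- The evaluation of a word of length `n` in `BS(N,M)`. -/
def wordVal (N M : ℕ) {n : ℕ} (w : Fin n → BSLetter) : BSGroup N M :=
  ((List.ofFn w).map (letterVal N M)).prod

/-- `g_{n,k}`: the number of words of length `n` evaluating to `a^k` in `BS(N,M)`. -/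
def gCount (N M n : ℕ) (k : ℤ) : ℕ :=
  Nat.card {w : Fin n → BSLetter // wordVal N M w = bsA N M ^ k}

/-- `g_n`: the number of words of length `n` whose evaluation lies in `⟨a⟩`. -/
def gTot (N M n : ℕ) : ℕ :=
  Nat.card {w : Fin n → BSLetter // ∃ k : ℤ, wordVal N M w = bsA N M ^ k}

/-- Membership in `𝓛`: the evaluation lies in `⟨a⟩` and no proper prefix evaluates
into the coset `b⁻¹⟨a⟩`. -/
def memL (N M : ℕ) {n : ℕ} (w : Fin n → BSLetter) : Prop :=
  (∃ k : ℤ, wordVal N M w = bsA N M ^ k) ∧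
    ∀ m < n, ¬ ∃ j : ℤ, prefixVal N M w m = (bsB N M)⁻¹ * bsA N M ^ j

/-- Membership in `𝓚`: the evaluation lies in `⟨a⟩` and no proper prefix evaluates
into the coset `b⟨a⟩`. -/
def memK (N M : ℕ) {n : ℕ} (w : Fin n → BSLetter) : Prop :=
  (∃ k : ℤ, wordVal N M w = bsA N M ^ k) ∧
    ∀ m < n, ¬ ∃ j : ℤ, prefixVal N M w m = bsB N M * bsA N M ^ j

/-- `ℓ_{n,k}`: the number of words in `𝓛` of length `n` evaluating to `a^k`. -/
def lCount (N M n : ℕ) (k : ℤ) : ℕ :=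
  Nat.card {w : Fin n → BSLetter // memL N M w ∧ wordVal N M w = bsA N M ^ k}

/-- `κ_{n,k}`: the number of words in `𝓚` of length `n` evaluating to `a^k`. -/
def kCount (N M n : ℕ) (k : ℤ) : ℕ :=
  Nat.card {w : Fin n → BSLetter // memK N M w ∧ wordVal N M w = bsA N M ^ k}

/-- The number of words of length `n` in `𝓛`. -/
def lTot (N M n : ℕ) : ℕ := Nat.card {w : Fin n → BSLetter // memL N M w}

/-- The number of words of length `n` in `𝓚`. -/
def kTot (N M n : ℕ) : ℕ := Nat.card {w : Fin n → BSLetter // memK N M w}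

/-- Package counting data `f n k` into the Laurent polynomial `Σ_k f n k · q^k`
(the counts vanish for `|k| > n`). -/
def coeffPoly (f : ℕ → ℤ → ℕ) (n : ℕ) : LaurentPolynomial ℚ :=
  ∑ k ∈ Finset.Icc (-(n : ℤ)) (n : ℤ), LaurentPolynomial.C (f n k : ℚ) * T k

/-- The generating function `G(z;q)`. -/
def Gser (N M : ℕ) : PowerSeries (LaurentPolynomial ℚ) := PowerSeries.mk (coeffPoly (gCount N M))

/-- The generating function `L(z;q)`. -/
def Lser (N M : ℕ) : PowerSeries (LaurentPolynomial ℚ) := PowerSeries.mk (coeffPoly (lCount N M))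

/-- The generating function `K(z;q)`. -/
def Kser (N M : ℕ) : PowerSeries (LaurentPolynomial ℚ) := PowerSeries.mk (coeffPoly (kCount N M))

/-- The `ℚ`-linear operator `Φ_{d,e}` on `ℚ[q,q⁻¹]`: maps `q^{dj} ↦ q^{ej}` and kills
`q^k` when `d ∤ k`. -/
def Phi (d e : ℕ) (p : LaurentPolynomial ℚ) : LaurentPolynomial ℚ :=
  Finsupp.sum (AddMonoidAlgebra.coeff p) fun k c => if (d : ℤ) ∣ k then LaurentPolynomial.C c * T ((e : ℤ) * (k / d)) else 0

/-- `Φ_{d,e}` applied coefficientwise to power series. -/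
def PhiSer (d e : ℕ) (f : PowerSeries (LaurentPolynomial ℚ)) : PowerSeries (LaurentPolynomial ℚ) :=
  PowerSeries.mk fun n => Phi d e (PowerSeries.coeff n f)

/-- The Laurent polynomial `Q = q + q⁻¹`. -/
def Qpoly : LaurentPolynomial ℚ := T 1 + T (-1)

end

/-!
Trivially `g_n ≤ 4^n`. For the lower bound, read a letter as a pair of bits
(`b = 11`, `b⁻¹ = 00`, `a = 10`, `a⁻¹ = 01`): its `b`-exponent is the number of ones minus one,
so the words of length `n` with `b`-exponent sum zero correspond to the `2n`-bit strings with
`n` ones, and there are `C(2n,n) ≥ 4^n / (2n+1)` of them. By the cycle lemma some rotation of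
such a word has all prefix `b`-exponent sums `≤ 0`, and in `BS(1,M)` the relation
`b⁻¹ a b = a^M` then moves every `a` to the left, so the rotated word evaluates into `⟨a⟩`.
Hence `C(2n,n) ≤ (n+1) g_n`, and `g_n^{1/n} → 4`.
-/

section Conjugation

variable {G : Type*} [Group G] {a b : G} {M : ℕ}

theorem inv_pow_mul_zpow_of_mul_eq (hab : a * b = b * a ^ M) (h : ℕ) (x : ℤ) :
    b⁻¹ ^ h * a ^ x = a ^ (x * M ^ h) * b⁻¹ ^ h := by
  have hconj : SemiconjBy b⁻¹ a (a ^ M) :=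
    calc b⁻¹ * a = b⁻¹ * (a * b) * b⁻¹ := by group
      _ = a ^ M * b⁻¹ := by rw [hab]; group
  induction h generalizing x with
  | zero => simp
  | succ h ih =>
    calc b⁻¹ ^ (h + 1) * a ^ x = b⁻¹ ^ h * (b⁻¹ * a ^ x) := by rw [pow_succ, mul_assoc]
      _ = b⁻¹ ^ h * a ^ (M * x) * b⁻¹ := by
        rw [(hconj.zpow_right x).eq, ← zpow_natCast a M, ← zpow_mul, mul_assoc]
      _ = a ^ (x * M ^ (h + 1)) * b⁻¹ ^ (h + 1) := by
        rw [ih, mul_assoc, ← pow_succ]; ring_nf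

end Conjugation

theorem bsA_mul_bsB (M : ℕ) : bsA 1 M * bsB 1 M = bsB 1 M * bsA 1 M ^ M := by
  have hrel : PresentedGroup.mk (bsRels 1 M)
      (FreeGroup.of 0 ^ 1 * FreeGroup.of 1 * (FreeGroup.of 0 ^ M)⁻¹ * (FreeGroup.of 1)⁻¹) = 1 :=
    (QuotientGroup.eq_one_iff _).mpr (Subgroup.subset_normalClosure rfl)
  simp only [map_mul, map_inv, map_pow, pow_one, mul_inv_eq_iff_eq_mul] at hrel
  exact hrel

def aExp (c : BSLetter) : ℤ := if c.1 = 0 then (if c.2 then 1 else -1) else 0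

def bExp (c : BSLetter) : ℤ := if c.1 = 1 then (if c.2 then 1 else -1) else 0

theorem letterVal_eq_zpow_mul_zpow (N M : ℕ) (c : BSLetter) :
    letterVal N M c = bsA N M ^ aExp c * bsB N M ^ bExp c := by
  rcases c with ⟨i, s⟩
  fin_cases i <;> cases s <;> simp [letterVal, aExp, bExp, bsA, bsB]

theorem exists_prod_letterVal_eq_of_sum_take_nonpos (M : ℕ) (l : List BSLetter)
    (hl : ∀ k, ((l.map bExp).take k).sum ≤ 0) :
    ∃ x : ℤ, (l.map (letterVal 1 M)).prod = bsA 1 M ^ x * bsB 1 M ^ (l.map bExp).sum := by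
  induction l using List.reverseRecOn with
  | nil => exact ⟨0, by simp⟩
  | append_singleton l c ih =>
    have hpre : ∀ k, ((l.map bExp).take k).sum ≤ 0 := fun k => by
      rw [List.take_eq_take_min, List.length_map,
        ← List.take_append_of_le_length (by simp), ← List.map_append]
      exact hl _
    obtain ⟨x, hx⟩ := ih hpre
    obtain ⟨h, hh⟩ := Int.exists_eq_neg_ofNat
      (by simpa only [List.take_length] using hpre (l.map bExp).length)
    refine ⟨x + aExp c * M ^ h, ?_⟩
    have hb : bsB 1 M ^ (l.map bExp).sum = (bsB 1 M)⁻¹ ^ h := by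
      rw [hh, zpow_neg, zpow_natCast, inv_pow]
    simp only [List.map_append, List.prod_append, hx, List.map_singleton, List.prod_singleton,
      letterVal_eq_zpow_mul_zpow, List.sum_append, List.sum_singleton, zpow_add, hb]
    rw [mul_assoc, ← mul_assoc (_ ^ h), inv_pow_mul_zpow_of_mul_eq (bsA_mul_bsB M)]
    simp only [mul_assoc]

theorem exists_wordVal_eq_zpow_of_sum_take_nonpos (M : ℕ) {n : ℕ} (w : Fin n → BSLetter)
    (hpre : ∀ k, (((List.ofFn w).map bExp).take k).sum ≤ 0)
    (hsum : ((List.ofFn w).map bExp).sum = 0) : ∃ x : ℤ, wordVal 1 M w = bsA 1 M ^ x := by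
  obtain ⟨x, hx⟩ := exists_prod_letterVal_eq_of_sum_take_nonpos M _ hpre
  exact ⟨x, by rw [wordVal, hx, hsum, zpow_zero, mul_one]⟩

theorem List.exists_sum_take_rotate_nonpos {α : Type*} [AddCommGroup α] [LinearOrder α]
    [IsOrderedAddMonoid α] (L : List α) (hL : L.sum = 0) :
    ∃ m ≤ L.length, ∀ k, ((L.rotate m).take k).sum ≤ 0 := by
  -- rotate so as to start right after a maximal prefix sum
  obtain ⟨m, hm, hmax⟩ := (Finset.range (L.length + 1)).exists_max_image
    (fun j => (L.take j).sum) (Finset.nonempty_range_iff.mpr (Nat.succ_ne_zero _))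
  have hm : m ≤ L.length := Nat.lt_succ_iff.mp (Finset.mem_range.mp hm)
  have hmax : ∀ j, (L.take j).sum ≤ (L.take m).sum := fun j => by
    rw [take_eq_take_min]
    exact hmax _ (Finset.mem_range.mpr (Nat.lt_succ_of_le (min_le_right _ _)))
  refine ⟨m, hm, fun k => ?_⟩
  have hdrop : ((L.drop m).take k).sum = (L.take (m + k)).sum - (L.take m).sum := by
    rw [take_add, sum_append]; abel
  rw [rotate_eq_drop_append_take hm, take_append, sum_append, take_take, length_drop, hdrop]
  rcases le_or_gt k (L.length - m) with hk | hk
  · rw [Nat.sub_eq_zero_of_le hk, Nat.zero_min, take_zero, sum_nil, add_zero, sub_nonpos]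
    exact hmax _
  · rw [take_of_length_le (by omega), hL, zero_sub, neg_add_nonpos_iff]
    exact hmax _

def Fin.rotateFn {α : Type*} {n : ℕ} (w : Fin n → α) (m : ℕ) : Fin n → α :=
  fun i => w ⟨(i + m) % n, Nat.mod_lt _ i.pos⟩

theorem List.ofFn_rotateFn {α : Type*} {n : ℕ} (w : Fin n → α) (m : ℕ) :
    List.ofFn (Fin.rotateFn w m) = (List.ofFn w).rotate m :=
  List.ext_getElem (by simp) fun k _ _ => by simp [Fin.rotateFn, List.getElem_rotate]

def letterOfBools : Bool → Bool → BSLetter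
  | true, true => (1, true)
  | false, false => (1, false)
  | true, false => (0, true)
  | false, true => (0, false)

theorem letterOfBools_injective {p q p' q' : Bool} (h : letterOfBools p q = letterOfBools p' q') :
    p = p' ∧ q = q' := by
  cases p <;> cases q <;> cases p' <;> cases q' <;> simp_all [letterOfBools]

theorem bExp_letterOfBools (p q : Bool) :
    bExp (letterOfBools p q) = (if p then 1 else 0) + (if q then 1 else 0) - 1 := by
  cases p <;> cases q <;> rfl

theorem centralBinom_le_card_sum_bExp_eq_zero (n : ℕ) :
    n.centralBinom ≤ Nat.card {w : Fin n → BSLetter // ∑ i, bExp (w i) = 0} := by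
  let word (s : Finset (Fin (n + n))) : Fin n → BSLetter :=
    fun i => letterOfBools (Fin.castAdd n i ∈ s) (Fin.natAdd n i ∈ s)
  have hsum (s : Finset (Fin (n + n))) (hs : s.card = n) : ∑ i, bExp (word s i) = 0 := by
    calc ∑ i, bExp (word s i)
        = ∑ i, ((if Fin.castAdd n i ∈ s then 1 else 0) +
            (if Fin.natAdd n i ∈ s then 1 else 0) - 1) := by
          simp only [word, bExp_letterOfBools, decide_eq_true_eq]
      _ = ∑ j : Fin (n + n), (if j ∈ s then 1 else 0) - n := by
          rw [Fin.sum_univ_add, Finset.sum_sub_distrib, Finset.sum_add_distrib]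
          simp
      _ = 0 := by simp [hs]
  have hinj : Function.Injective fun s : {s : Finset (Fin (n + n)) // s.card = n} =>
      (⟨word s.1, hsum s.1 s.2⟩ : {w : Fin n → BSLetter // ∑ i, bExp (w i) = 0}) := by
    rintro ⟨s, hs⟩ ⟨t, ht⟩ hst
    have hmem (i : Fin n) := letterOfBools_injective (congrFun (congrArg Subtype.val hst) i)
    ext j
    refine Fin.addCases (fun i => ?_) (fun i => ?_) j
    · simpa using (hmem i).1
    · simpa using (hmem i).2
  calc n.centralBinom = Nat.card {s : Finset (Fin (n + n)) // s.card = n} := by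
        rw [Nat.card_eq_fintype_card, Fintype.card_finset_len, Fintype.card_fin,
          Nat.centralBinom, two_mul]
    _ ≤ _ := Nat.card_le_card_of_injective _ hinj

theorem card_sum_bExp_eq_zero_le (M n : ℕ) :
    Nat.card {w : Fin n → BSLetter // ∑ i, bExp (w i) = 0} ≤ (n + 1) * gTot 1 M n := by
  have hrot (w : {w : Fin n → BSLetter // ∑ i, bExp (w i) = 0}) :
      ∃ m : Fin (n + 1), ∃ x : ℤ, wordVal 1 M (Fin.rotateFn w.1 m) = bsA 1 M ^ x := by
    have hsum : ((List.ofFn w.1).map bExp).sum = 0 := by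
      rw [List.map_ofFn, List.sum_ofFn]; exact w.2
    obtain ⟨m, hmn, hpre⟩ := List.exists_sum_take_rotate_nonpos _ hsum
    rw [List.length_map, List.length_ofFn] at hmn
    refine ⟨⟨m, Nat.lt_succ_of_le hmn⟩, exists_wordVal_eq_zpow_of_sum_take_nonpos M _ ?_ ?_⟩
    · simpa only [List.ofFn_rotateFn, List.map_rotate] using hpre
    · rw [List.ofFn_rotateFn, List.map_rotate, (List.rotate_perm _ _).sum_eq, hsum]
  choose m hm using hrot
  have hinj : Function.Injective fun w => (m w, (⟨Fin.rotateFn w.1 (m w), hm w⟩ :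
      {w : Fin n → BSLetter // ∃ x : ℤ, wordVal 1 M w = bsA 1 M ^ x})) := by
    intro w w' hww'
    simp only [Prod.mk.injEq, Subtype.mk.injEq] at hww'
    obtain ⟨hmw, hw⟩ := hww'
    have := congrArg List.ofFn hw
    rw [List.ofFn_rotateFn, List.ofFn_rotateFn, hmw] at this
    exact Subtype.ext (List.ofFn_injective (List.rotate_injective _ this))
  calc Nat.card _ ≤ Nat.card (Fin (n + 1) × _) := Nat.card_le_card_of_injective _ hinj
    _ = (n + 1) * gTot 1 M n := by
        rw [Nat.card_prod, Nat.card_eq_fintype_card, Fintype.card_fin, gTot]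

theorem four_pow_le_mul_gTot (M n : ℕ) : 4 ^ n ≤ (n + 1) ^ 3 * gTot 1 M n :=
  calc 4 ^ n ≤ (2 * n + 1) * n.centralBinom := Nat.four_pow_le_two_mul_add_one_mul_central_binom n
    _ ≤ (2 * n + 1) * ((n + 1) * gTot 1 M n) := Nat.mul_le_mul_left _
        ((centralBinom_le_card_sum_bExp_eq_zero n).trans (card_sum_bExp_eq_zero_le M n))
    _ ≤ (n + 1) ^ 3 * gTot 1 M n := by
        rw [← mul_assoc, pow_succ]
        gcongr
        nlinarith

theorem gTot_le_four_pow (N M n : ℕ) : gTot N M n ≤ 4 ^ n :=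
  calc gTot N M n ≤ Nat.card (Fin n → BSLetter) :=
        Nat.card_le_card_of_injective _ Subtype.val_injective
    _ = 4 ^ n := by simp

open Filter Topology in
theorem tendsto_rpow_inv_of_pow_le_of_le_pow_mul {a : ℕ → ℝ} {r : ℝ} (k : ℕ) (ha : ∀ n, 0 ≤ a n)
    (hupper : ∀ n, a n ≤ r ^ n) (hlower : ∀ n, r ^ n ≤ (n + 1) ^ k * a n) :
    Tendsto (fun n : ℕ => a n ^ (1 / (n : ℝ))) atTop (𝓝 r) := by
  have hr : 0 ≤ r := (ha 1).trans (by simpa using hupper 1)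
  have hroot {x : ℝ} (hx : 0 ≤ x) {n : ℕ} (hn : n ≠ 0) : (x ^ n) ^ (1 / (n : ℝ)) = x := by
    rw [one_div, Real.pow_rpow_inv_natCast hx hn]
  -- `(n + 1) ^ (k / n) = x ^ (k / (x - 1))` with `x = n + 1`
  have hpoly : Tendsto (fun n : ℕ => ((n : ℝ) + 1) ^ ((k : ℝ) / n)) atTop (𝓝 1) := by
    refine ((tendsto_rpow_div_mul_add k 1 (-1) one_ne_zero.symm).comp
      (tendsto_atTop_add_const_right _ 1 tendsto_natCast_atTop_atTop)).congr fun n => ?_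
    simp only [Function.comp_apply]
    ring_nf
  have hlow : Tendsto (fun n : ℕ => r / ((n : ℝ) + 1) ^ ((k : ℝ) / n)) atTop (𝓝 r) := by
    have := (tendsto_const_nhds (x := r)).div hpoly one_ne_zero
    rwa [div_one] at this
  refine tendsto_of_tendsto_of_tendsto_of_le_of_le' hlow tendsto_const_nhds ?_ ?_
  · filter_upwards [eventually_ne_atTop 0] with n hn
    have hpos : 0 < ((n : ℝ) + 1) ^ ((k : ℝ) / n) := by positivity
    rw [div_le_iff₀ hpos]
    calc r = (r ^ n) ^ (1 / (n : ℝ)) := (hroot hr hn).symm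
      _ ≤ ((n + 1) ^ k * a n) ^ (1 / (n : ℝ)) := by gcongr; exact hlower n
      _ = a n ^ (1 / (n : ℝ)) * ((n : ℝ) + 1) ^ ((k : ℝ) / n) := by
        rw [Real.mul_rpow (by positivity) (ha n), ← Real.rpow_natCast,
          ← Real.rpow_mul (by positivity), mul_one_div, mul_comm]
  · filter_upwards [eventually_ne_atTop 0] with n hn
    calc a n ^ (1 / (n : ℝ)) ≤ (r ^ n) ^ (1 / (n : ℝ)) := by gcongr; exacts [ha n, hupper n]
      _ = r := hroot hr hn

open Filter in
theorem bs1M_limsup_gTot_eq_four_general (M : ℕ) :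
    (Filter.atTop.limsup fun n : ℕ => (gTot 1 M n : ℝ) ^ (1 / (n : ℝ))) = 4 :=
  (tendsto_rpow_inv_of_pow_le_of_le_pow_mul 3 (fun n => Nat.cast_nonneg _)
    (fun n => by exact_mod_cast gTot_le_four_pow 1 M n)
    (fun n => by exact_mod_cast four_pow_le_mul_gTot M n)).limsup_eq

open Filter in
/-- For the (amenable) group `BS(1,M)`, the growth rate of the number `g_n` of words
of length `n` evaluating into `⟨a⟩` is exactly `4`. -/
theorem bs1M_limsup_gTot_eq_four (M : ℕ) (hM : 1 ≤ M) :
    (Filter.atTop.limsup fun n : ℕ => (gTot 1 M n : ℝ) ^ (1 / (n : ℝ))) = 4 :=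
  bs1M_limsup_gTot_eq_four_general M
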